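/- arXiv:1310.7004 — 3 statements merged into one kernel-verified Lean document; each statement's English description precedes it below -/
import Mathlib

section
/- For every n ≥ 3, the convex geometric Ramsey number of the cycle C_n satisfies R_c(C_n) ≥ (n−1)² + 1: there exists a 2-colouring of the edges of the complete geometric graph on (n−1)² points in convex position containing no monochromatic non-crossing copy of C_n. -/
/-- Points of the plane. -/
abbrev Pt : Type := ℝ × ℝ

noncomputable section

/-- Cross product (orientation test) of the triple `(p, q, r)`. -/
def crossProd (p q r : Pt) : ℝ :=
  (q.1 - p.1) * (r.2 - p.2) - (q.2 - p.2) * (r.1 - p.1)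

/-- Two segments cross iff they meet in a point interior to both. -/
def SegCross (a b c d : Pt) : Prop :=
  (openSegment ℝ a b ∩ openSegment ℝ c d).Nonempty

/-- A finite point set is in general position if no three of its points are collinear. -/
def GenPos (P : Finset Pt) : Prop :=
  ∀ p ∈ P, ∀ q ∈ P, ∀ r ∈ P, p ≠ q → p ≠ r → q ≠ r →
    ¬ Collinear ℝ ({p, q, r} : Set Pt)

/-- A finite point set is in convex position if no point lies in the convex hull
of the others. -/
def ConvexPos (P : Finset Pt) : Prop :=
  ∀ p ∈ P, p ∉ convexHull ℝ ((P.erase p : Finset Pt) : Set Pt)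

/-- Two finite point sets are mutually avoiding: both have at least two points, no
line through two points of one meets the convex hull of the other. -/
def MutuallyAvoiding (A B : Finset Pt) : Prop :=
  2 ≤ A.card ∧ 2 ≤ B.card ∧
  (∀ a ∈ A, ∀ a' ∈ A, a ≠ a' →
    Disjoint ((affineSpan ℝ ({a, a'} : Set Pt) : AffineSubspace ℝ Pt) : Set Pt)
      (convexHull ℝ (B : Set Pt))) ∧
  (∀ b ∈ B, ∀ b' ∈ B, b ≠ b' →
    Disjoint ((affineSpan ℝ ({b, b'} : Set Pt) : AffineSubspace ℝ Pt) : Set Pt)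
      (convexHull ℝ (A : Set Pt)))

/-- The canonical order on the first set `A` of a mutually avoiding pair `(A, B)`:
`p` precedes `q` iff every point of `B` sees the (ordered) pair `(p, q)` clockwise. -/
def precA (B : Finset Pt) (p q : Pt) : Prop := ∀ b ∈ B, crossProd b p q < 0

/-- The canonical order on the second set `B` of a mutually avoiding pair `(A, B)`:
`p` precedes `q` iff every point of `A` sees the (ordered) pair `(p, q)`
counterclockwise. -/
def precB (A : Finset Pt) (p q : Pt) : Prop := ∀ a ∈ A, 0 < crossProd a p q

/-- The edge segments (as ordered pairs of endpoints) of the straight-line drawing of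
the ladder graph `L_{2n}` with rails `x 0 — x 1 — ⋯ — x (n-1)` and
`y 0 — ⋯ — y (n-1)` and rungs `x i — y i`. -/
def ladderEdges (n : ℕ) (x y : Fin n → Pt) : Set (Pt × Pt) :=
  {e | (∃ i j : Fin n, (i : ℕ) + 1 = (j : ℕ) ∧ e = (x i, x j)) ∨
       (∃ i j : Fin n, (i : ℕ) + 1 = (j : ℕ) ∧ e = (y i, y j)) ∨
       (∃ i : Fin n, e = (x i, y i))}

/-- A family of segments is non-crossing if no two distinct ones cross. -/
def NoncrossingEdges (E : Set (Pt × Pt)) : Prop :=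
  ∀ e ∈ E, ∀ f ∈ E, e ≠ f → ¬ SegCross e.1 e.2 f.1 f.2

/-- Two finite point sets can be (strictly) separated by a line. -/
def SeparatedByLine (A B : Finset Pt) : Prop :=
  ∃ a b c : ℝ, (a ≠ 0 ∨ b ≠ 0) ∧ (∀ p ∈ A, a * p.1 + b * p.2 < c) ∧
    (∀ q ∈ B, c < a * q.1 + b * q.2)

/-- The 2-coloured complete geometric graph on `C` (colouring `χ`, assumed symmetric)
contains a monochromatic non-crossing copy of the ladder graph `L_{2n}`. -/
def MonoNoncrossingLadder (n : ℕ) (C : Finset Pt) (χ : Pt → Pt → Bool) : Prop :=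
  ∃ (c : Bool) (x y : Fin n → Pt),
    (∀ i, x i ∈ C) ∧ (∀ i, y i ∈ C) ∧
    Function.Injective (Sum.elim x y) ∧
    (∀ e ∈ ladderEdges n x y, χ e.1 e.2 = c) ∧
    NoncrossingEdges (ladderEdges n x y)

/-- The edge segments of the straight-line drawing of the cycle `C_n` on the
vertices `f 0, f 1, …, f (n-1)` (cyclically). -/
def cycleEdges (n : ℕ) (f : ZMod n → Pt) : Set (Pt × Pt) :=
  {e | ∃ i : ZMod n, e = (f i, f (i + 1))}


/-! ### Auxiliary machinery -/

section AuxGeom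

lemma crossProd_swap23 (p q r : Pt) : crossProd p r q = -crossProd p q r := by
  simp [crossProd]; ring

lemma crossProd_cyc (p q r : Pt) : crossProd q r p = crossProd p q r := by
  simp [crossProd]; ring

lemma cramer_sum (o a b x : Pt) :
    crossProd x a b + crossProd o x b + crossProd o a x = crossProd o a b := by
  simp [crossProd]; ring

lemma cramer_vec (o a b x : Pt) :
    crossProd x a b • o + crossProd o x b • a + crossProd o a x • b
      = crossProd o a b • x := by
  simp [crossProd, Prod.ext_iff, Prod.smul_def]; constructor <;> ring

lemma cross_sum_three (o p q r : Pt) :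
    crossProd o p q + crossProd o q r + crossProd o r p = crossProd p q r := by
  simp [crossProd]; ring

lemma mem_hull_triple {o a b x : Pt} {α β γ : ℝ} (hα : 0 ≤ α) (hβ : 0 ≤ β) (hγ : 0 ≤ γ)
    (hs : 0 < α + β + γ) (h : α • o + β • a + γ • b = (α + β + γ) • x) :
    x ∈ convexHull ℝ ({o, a, b} : Set Pt) := by
  have hmem := Finset.centerMass_mem_convexHull (R := ℝ) (s := ({o, a, b} : Set Pt))
    (Finset.univ : Finset (Fin 3)) (w := ![α, β, γ])
    (by intro i _; fin_cases i <;> simpa)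
    (by simpa [Fin.sum_univ_three] using hs)
    (z := ![o, a, b]) (by intro i _; fin_cases i <;> simp)
  have hcm : (Finset.univ : Finset (Fin 3)).centerMass ![α, β, γ] ![o, a, b] = x := by
    rw [Finset.centerMass]
    simp only [Fin.sum_univ_three, Matrix.cons_val_zero, Matrix.cons_val_one,
      Matrix.head_cons, Matrix.cons_val_two, Matrix.tail_cons]
    rw [h, smul_smul, inv_mul_cancel₀ hs.ne', one_smul]
  rwa [hcm] at hmem

/-- The centroid of a finite point set. -/
def ctr (C : Finset Pt) : Pt := (C.card : ℝ)⁻¹ • ∑ z ∈ C, z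

lemma centroid_trick {C : Finset Pt} (hC : ConvexPos C) (hcard : 2 ≤ C.card)
    {p : Pt} (hp : p ∈ C)
    (h : p ∈ convexHull ℝ (insert (ctr C) ((C.erase p : Finset Pt) : Set Pt))) : False := by
  set N := C.card with hN
  have hNe : (C.erase p).Nonempty := by
    rw [← Finset.card_pos, Finset.card_erase_of_mem hp]; omega
  rw [convexHull_insert (Finset.coe_nonempty.mpr hNe), mem_convexJoin] at h
  obtain ⟨o, ho, y, hy, hseg⟩ := h
  rw [Set.mem_singleton_iff] at ho
  obtain ⟨α, β, hα, hβ, hαβ, heq⟩ := hseg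
  rw [ctr] at ho
  set M := (C.erase p).card with hM
  have hM1 : M = N - 1 := by rw [hM, hN, Finset.card_erase_of_mem hp]
  have hMR : (M : ℝ) = (N : ℝ) - 1 := by
    rw [hM1]; push_cast [Nat.cast_sub (by omega : 1 ≤ N)]; ring
  have hMpos : 0 < M := by omega
  set c' : Pt := (M : ℝ)⁻¹ • ∑ z ∈ C.erase p, z with hc'def
  have hc' : c' ∈ convexHull ℝ ((C.erase p : Finset Pt) : Set Pt) := by
    have hmem := Finset.centerMass_mem_convexHull (R := ℝ)
      (s := ((C.erase p : Finset Pt) : Set Pt)) (C.erase p) (w := fun _ => (1:ℝ))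
      (by intro i _; norm_num)
      (by rw [Finset.sum_const, nsmul_eq_mul, mul_one]; exact_mod_cast hMpos)
      (z := id) (fun i hi => Finset.mem_coe.mpr hi)
    have h2 : (C.erase p).centerMass (fun _ => (1:ℝ)) id = c' := by
      simp [Finset.centerMass, hc'def, Finset.sum_const]
      rfl
    rwa [h2] at hmem
  have hsum : ∑ z ∈ C, z = p + (M : ℝ) • c' := by
    rw [hc'def, smul_inv_smul₀ (by exact_mod_cast hMpos.ne' : (M:ℝ) ≠ 0)]
    rw [← Finset.sum_erase_add C _ hp]; abel
  have hNR : (0:ℝ) < (N:ℝ) := by exact_mod_cast (by omega : 0 < N)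
  set δ : ℝ := 1 - α / N with hδdef
  have hδ : 0 < δ := by
    have h2N : (2:ℝ) ≤ (N:ℝ) := by exact_mod_cast hcard
    have : α / N < 1 := by rw [div_lt_one hNR]; linarith
    simp only [hδdef]; linarith
  have heq2 : δ • p = (α * (M:ℝ) / N) • c' + β • y := by
    have ho2 : (N:ℝ) • o = ∑ z ∈ C, z := by
      rw [ho, smul_inv_smul₀ hNR.ne']
    rw [hsum] at ho2
    have e1 : (N:ℝ) * o.1 = p.1 + (M:ℝ) * c'.1 := congrArg Prod.fst ho2
    have e2 : (N:ℝ) * o.2 = p.2 + (M:ℝ) * c'.2 := congrArg Prod.snd ho2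
    have f1 : α * o.1 + β * y.1 = p.1 := congrArg Prod.fst heq
    have f2 : α * o.2 + β * y.2 = p.2 := congrArg Prod.snd heq
    have g1 : δ * p.1 = (α * (M:ℝ) / N) * c'.1 + β * y.1 := by
      rw [hδdef]; field_simp; nlinarith [e1, f1]
    have g2 : δ * p.2 = (α * (M:ℝ) / N) * c'.2 + β * y.2 := by
      rw [hδdef]; field_simp; nlinarith [e2, f2]
    exact Prod.ext g1 g2
  have hpseg : p ∈ segment ℝ c' y := by
    refine ⟨δ⁻¹ * (α * (M:ℝ) / N), δ⁻¹ * β,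
      mul_nonneg (inv_nonneg.mpr hδ.le) (div_nonneg (mul_nonneg hα (Nat.cast_nonneg _)) (Nat.cast_nonneg _)), by positivity, ?_, ?_⟩
    · rw [← mul_add, ← hαβ]
      field_simp
      rw [hδdef]; field_simp
      linear_combination α * hMR + α * hαβ
    · rw [mul_smul, mul_smul, ← smul_add, ← heq2, smul_smul,
        inv_mul_cancel₀ hδ.ne', one_smul]
  exact hC p hp ((convex_convexHull ℝ _).segment_subset hc' hy hpseg)

/-- The point `p` as a complex number based at `o`. -/
def cplx (o p : Pt) : ℂ := ⟨p.1 - o.1, p.2 - o.2⟩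

/-- The angle of `p` as seen from `o`. -/
def theta (o p : Pt) : ℝ := (cplx o p).arg

lemma im_conj_mul (z w : ℂ) :
    ((starRingEnd ℂ) z * w).im = ‖z‖ * ‖w‖ * Real.sin (w.arg - z.arg) := by
  have a1 := Complex.norm_mul_cos_arg z
  have a2 := Complex.norm_mul_sin_arg z
  have b1 := Complex.norm_mul_cos_arg w
  have b2 := Complex.norm_mul_sin_arg w
  simp only [Complex.mul_im, Complex.conj_re, Complex.conj_im, Real.sin_sub]
  linear_combination (-w.im) * a1 + w.re * a2 - (‖z‖ * Real.cos z.arg) * b2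
    + (‖z‖ * Real.sin z.arg) * b1

lemma crossProd_eq_sin (o x y : Pt) :
    crossProd o x y = ‖(cplx o x)‖ * ‖(cplx o y)‖ *
      Real.sin (theta o y - theta o x) := by
  rw [show theta o y - theta o x = (cplx o y).arg - (cplx o x).arg from rfl, ← im_conj_mul]
  simp only [Complex.mul_im, Complex.conj_re, Complex.conj_im, crossProd, cplx]
  ring

lemma cplx_ne_zero {C : Finset Pt} (hC : ConvexPos C) (hcard : 2 ≤ C.card)
    {p : Pt} (hp : p ∈ C) : cplx (ctr C) p ≠ 0 := by
  intro h
  apply centroid_trick hC hcard hp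
  have hpo : p = ctr C := by
    have h1 : p.1 - (ctr C).1 = 0 := congrArg Complex.re h
    have h2 : p.2 - (ctr C).2 = 0 := congrArg Complex.im h
    exact Prod.ext (by linarith) (by linarith)
  exact subset_convexHull ℝ _ (by rw [hpo]; exact Set.mem_insert _ _)

lemma theta_inj {C : Finset Pt} (hC : ConvexPos C) (hcard : 2 ≤ C.card)
    {p q : Pt} (hp : p ∈ C) (hq : q ∈ C)
    (h : theta (ctr C) p = theta (ctr C) q) : p = q := by
  by_contra hne
  set o := ctr C with hodef
  set z := cplx o p with hz
  set w := cplx o q with hw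
  have hz0 : z ≠ 0 := cplx_ne_zero hC hcard hp
  have hw0 : w ≠ 0 := cplx_ne_zero hC hcard hq
  have key : (‖z‖ : ℂ) * w = (‖w‖ : ℂ) * z := by
    conv_lhs => rw [← Complex.norm_mul_exp_arg_mul_I w]
    conv_rhs => rw [← Complex.norm_mul_exp_arg_mul_I z]
    rw [show w.arg = z.arg from h.symm]
    ring
  have k1 : ‖z‖ * w.re = ‖w‖ * z.re := by
    have := congrArg Complex.re key; simpa using this
  have k2 : ‖z‖ * w.im = ‖w‖ * z.im := by
    have := congrArg Complex.im key; simpa using this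
  have hza : 0 < ‖z‖ := norm_pos_iff.mpr hz0
  have hwa : 0 < ‖w‖ := norm_pos_iff.mpr hw0
  set t : ℝ := ‖w‖ / ‖z‖ with htdef
  have ht : 0 < t := by positivity
  have h1 : q.1 - o.1 = t * (p.1 - o.1) := by
    have : w.re = q.1 - o.1 := rfl
    have hz1 : z.re = p.1 - o.1 := rfl
    rw [← this, ← hz1, htdef]; field_simp; linarith [k1]
  have h2 : q.2 - o.2 = t * (p.2 - o.2) := by
    have : w.im = q.2 - o.2 := rfl
    have hz1 : z.im = p.2 - o.2 := rfl
    rw [← this, ← hz1, htdef]; field_simp; linarith [k2]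
  rcases lt_trichotomy t 1 with hlt | heq1 | hgt
  · apply centroid_trick hC hcard hq
    have hmem : q ∈ convexHull ℝ ({o, p, p} : Set Pt) := by
      apply mem_hull_triple (α := 1 - t) (β := t) (γ := 0) (by linarith) ht.le le_rfl
        (by linarith)
      apply Prod.ext <;> simp [Prod.smul_def, Prod.ext_iff] <;> nlinarith [h1, h2]
    refine convexHull_mono ?_ hmem
    have hpe : p ∈ (insert o ((C.erase q : Finset Pt) : Set Pt)) :=
      Set.mem_insert_iff.mpr (Or.inr (Finset.mem_coe.mpr
        (Finset.mem_erase.mpr ⟨hne, hp⟩)))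
    rintro x (rfl | rfl | rfl)
    · exact Set.mem_insert _ _
    · exact hpe
    · exact hpe
  · rw [heq1, one_mul] at h1 h2
    exact hne (Prod.ext (by linarith) (by linarith))
  · apply centroid_trick hC hcard hp
    have hmem : p ∈ convexHull ℝ ({o, q, q} : Set Pt) := by
      apply mem_hull_triple (α := 1 - t⁻¹) (β := t⁻¹) (γ := 0)
        (by rw [sub_nonneg, inv_le_one_iff₀]; right; linarith)
        (by positivity) le_rfl (by linarith)
      have ht1 : p.1 - o.1 = t⁻¹ * (q.1 - o.1) := by field_simp; linarith [h1]
      have ht2 : p.2 - o.2 = t⁻¹ * (q.2 - o.2) := by field_simp; linarith [h2]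
      apply Prod.ext <;> simp [Prod.smul_def, Prod.ext_iff] <;> nlinarith [ht1, ht2]
    refine convexHull_mono ?_ hmem
    have hqe : q ∈ (insert o ((C.erase p : Finset Pt) : Set Pt)) :=
      Set.mem_insert_iff.mpr (Or.inr (Finset.mem_coe.mpr
        (Finset.mem_erase.mpr ⟨fun hpq => hne hpq.symm, hq⟩)))
    rintro x (rfl | rfl | rfl)
    · exact Set.mem_insert _ _
    · exact hqe
    · exact hqe

lemma crossProd_swap12 (p q r : Pt) : crossProd q p r = -crossProd p q r := by
  simp [crossProd]; ring

lemma crossProd_swap13 (p q r : Pt) : crossProd r q p = -crossProd p q r := by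
  simp [crossProd]; ring

lemma star_lemma {C : Finset Pt} (hC : ConvexPos C) (hcard : 2 ≤ C.card)
    {p q r : Pt} (hp : p ∈ C) (hq : q ∈ C) (hr : r ∈ C)
    (h1 : theta (ctr C) p < theta (ctr C) q) (h2 : theta (ctr C) q < theta (ctr C) r) :
    0 < crossProd p q r := by
  by_contra hcon
  push_neg at hcon
  set o := ctr C with hodef
  have hpq : p ≠ q := fun h => absurd (congrArg (theta o) h) (ne_of_lt h1)
  have hqr : q ≠ r := fun h => absurd (congrArg (theta o) h) (ne_of_lt h2)
  have hpr : p ≠ r := fun h => absurd (congrArg (theta o) h) (ne_of_lt (h1.trans h2))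
  have hRp : 0 < ‖(cplx o p)‖ := norm_pos_iff.mpr (cplx_ne_zero hC hcard hp)
  have hRq : 0 < ‖(cplx o q)‖ := norm_pos_iff.mpr (cplx_ne_zero hC hcard hq)
  have hRr : 0 < ‖(cplx o r)‖ := norm_pos_iff.mpr (cplx_ne_zero hC hcard hr)
  set g1 : ℝ := theta o q - theta o p with hg1def
  set g2 : ℝ := theta o r - theta o q with hg2def
  set g3 : ℝ := 2 * Real.pi - g1 - g2 with hg3def
  have hg1 : 0 < g1 := by simp only [hg1def]; linarith
  have hg2 : 0 < g2 := by simp only [hg2def]; linarith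
  have hg3 : 0 < g3 := by
    have b1 : theta o r ≤ Real.pi := Complex.arg_le_pi _
    have b2 : -Real.pi < theta o p := Complex.neg_pi_lt_arg _
    simp only [hg3def, hg1def, hg2def]; linarith
  have hs1 : crossProd o p q
      = ‖(cplx o p)‖ * ‖(cplx o q)‖ * Real.sin g1 :=
    crossProd_eq_sin o p q
  have hs2 : crossProd o q r
      = ‖(cplx o q)‖ * ‖(cplx o r)‖ * Real.sin g2 :=
    crossProd_eq_sin o q r
  have hs3 : crossProd o r p
      = ‖(cplx o r)‖ * ‖(cplx o p)‖ * Real.sin g3 := by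
    rw [crossProd_eq_sin o r p]
    congr 1
    rw [show g3 = theta o p - theta o r + 2 * Real.pi by
      simp only [hg3def, hg1def, hg2def]; ring]
    rw [Real.sin_add_two_pi]
  have hsum := cross_sum_three o p q r
  -- helper facts
  have key1 : crossProd o p q ≤ 0 → Real.pi ≤ g1 := by
    intro h
    by_contra hlt
    push_neg at hlt
    linarith [mul_pos (mul_pos hRp hRq) (Real.sin_pos_of_pos_of_lt_pi hg1 hlt), hs1.le, hs1.ge]
  have key2 : crossProd o q r ≤ 0 → Real.pi ≤ g2 := by
    intro h
    by_contra hlt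
    push_neg at hlt
    linarith [mul_pos (mul_pos hRq hRr) (Real.sin_pos_of_pos_of_lt_pi hg2 hlt), hs2.le, hs2.ge]
  have key3 : crossProd o r p ≤ 0 → Real.pi ≤ g3 := by
    intro h
    by_contra hlt
    push_neg at hlt
    linarith [mul_pos (mul_pos hRr hRp) (Real.sin_pos_of_pos_of_lt_pi hg3 hlt), hs3.le, hs3.ge]
  have pos1 : g1 < Real.pi → 0 < crossProd o p q := by
    intro h; linarith [mul_pos (mul_pos hRp hRq) (Real.sin_pos_of_pos_of_lt_pi hg1 h), hs1.le, hs1.ge]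
  have pos2 : g2 < Real.pi → 0 < crossProd o q r := by
    intro h; linarith [mul_pos (mul_pos hRq hRr) (Real.sin_pos_of_pos_of_lt_pi hg2 h), hs2.le, hs2.ge]
  have pos3 : g3 < Real.pi → 0 < crossProd o r p := by
    intro h; linarith [mul_pos (mul_pos hRr hRp) (Real.sin_pos_of_pos_of_lt_pi hg3 h), hs3.le, hs3.ge]
  rcases le_or_gt (crossProd o p q) 0 with c1 | c1
  · -- r ∈ hull {o, q, p}
    have hπ := key1 c1
    have w2 : 0 < crossProd o q r := pos2 (by linarith)
    have w3 : 0 < crossProd o r p := pos3 (by linarith)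
    apply centroid_trick hC hcard hr
    have hmem : r ∈ convexHull ℝ ({o, q, p} : Set Pt) := by
      apply mem_hull_triple (α := crossProd r q p) (β := crossProd o r p)
        (γ := crossProd o q r)
        (by rw [crossProd_swap13]; linarith) w3.le w2.le
        (by rw [crossProd_swap13]; linarith)
      rw [show crossProd r q p + crossProd o r p + crossProd o q r = crossProd o q p by
        linear_combination cramer_sum o q p r]
      linear_combination (norm := module) cramer_vec o q p r
    refine convexHull_mono ?_ hmem
    rintro x (rfl | rfl | rfl)
    · exact Set.mem_insert _ _
    · exact Set.mem_insert_iff.mpr (Or.inr (Finset.mem_coe.mpr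
        (Finset.mem_erase.mpr ⟨hqr, hq⟩)))
    · exact Set.mem_insert_iff.mpr (Or.inr (Finset.mem_coe.mpr
        (Finset.mem_erase.mpr ⟨hpr, hp⟩)))
  rcases le_or_gt (crossProd o q r) 0 with c2 | c2
  · -- p ∈ hull {o, r, q}
    have hπ := key2 c2
    have w3 : 0 < crossProd o r p := pos3 (by linarith)
    apply centroid_trick hC hcard hp
    have hmem : p ∈ convexHull ℝ ({o, r, q} : Set Pt) := by
      apply mem_hull_triple (α := crossProd p r q) (β := crossProd o p q)
        (γ := crossProd o r p)
        (by rw [crossProd_swap23]; linarith) c1.le w3.le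
        (by rw [crossProd_swap23]; linarith)
      rw [show crossProd p r q + crossProd o p q + crossProd o r p = crossProd o r q by
        linear_combination cramer_sum o r q p]
      linear_combination (norm := module) cramer_vec o r q p
    refine convexHull_mono ?_ hmem
    rintro x (rfl | rfl | rfl)
    · exact Set.mem_insert _ _
    · exact Set.mem_insert_iff.mpr (Or.inr (Finset.mem_coe.mpr
        (Finset.mem_erase.mpr ⟨fun h => hpr h.symm, hr⟩)))
    · exact Set.mem_insert_iff.mpr (Or.inr (Finset.mem_coe.mpr
        (Finset.mem_erase.mpr ⟨fun h => hpq h.symm, hq⟩)))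
  rcases le_or_gt (crossProd o r p) 0 with c3 | c3
  · -- q ∈ hull {o, p, r}
    apply centroid_trick hC hcard hq
    have hmem : q ∈ convexHull ℝ ({o, p, r} : Set Pt) := by
      apply mem_hull_triple (α := crossProd q p r) (β := crossProd o q r)
        (γ := crossProd o p q)
        (by rw [crossProd_swap12]; linarith) c2.le c1.le
        (by rw [crossProd_swap12]; linarith)
      rw [show crossProd q p r + crossProd o q r + crossProd o p q = crossProd o p r by
        linear_combination cramer_sum o p r q]
      linear_combination (norm := module) cramer_vec o p r q
    refine convexHull_mono ?_ hmem
    rintro x (rfl | rfl | rfl)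
    · exact Set.mem_insert _ _
    · exact Set.mem_insert_iff.mpr (Or.inr (Finset.mem_coe.mpr
        (Finset.mem_erase.mpr ⟨hpq, hp⟩)))
    · exact Set.mem_insert_iff.mpr (Or.inr (Finset.mem_coe.mpr
        (Finset.mem_erase.mpr ⟨fun h => hqr h.symm, hr⟩)))
  · linarith

lemma frac01 {x y : ℝ} (h : x * y < 0) : 0 < x / (x - y) ∧ x / (x - y) < 1 := by
  rcases mul_neg_iff.mp h with ⟨hx, hy⟩ | ⟨hx, hy⟩
  · have hd : 0 < x - y := by linarith
    exact ⟨div_pos hx hd, (div_lt_one hd).mpr (by linarith)⟩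
  · have hd : 0 < -x - -y := by linarith
    have hrw : x / (x - y) = (-x) / (-x - -y) := by
      rw [show -x - -y = -(x - y) by ring, neg_div_neg_eq]
    rw [hrw]
    exact ⟨div_pos (by linarith) hd, (div_lt_one hd).mpr (by linarith)⟩

lemma segCross_of_straddle {a b c d : Pt}
    (h1 : crossProd a b c * crossProd a b d < 0)
    (h2 : crossProd c d a * crossProd c d b < 0) :
    SegCross a b c d := by
  obtain ⟨ht0, ht1⟩ := frac01 h1
  obtain ⟨hs0, hs1⟩ := frac01 h2
  set t : ℝ := crossProd a b c / (crossProd a b c - crossProd a b d) with htdef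
  set s : ℝ := crossProd c d a / (crossProd c d a - crossProd c d b) with hsdef
  have hfd : crossProd a b c - crossProd a b d ≠ 0 := by
    intro h
    have heq : crossProd a b d = crossProd a b c := by linarith
    rw [heq] at h1
    nlinarith [sq_nonneg (crossProd a b c)]
  have hga : crossProd c d a - crossProd c d b ≠ 0 := by
    intro h
    have heq : crossProd c d b = crossProd c d a := by linarith
    rw [heq] at h2
    nlinarith [sq_nonneg (crossProd c d a)]
  refine ⟨(1 - t) • c + t • d, ?_, ?_⟩
  · refine ⟨1 - s, s, by linarith, hs0, by ring, ?_⟩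
    apply Prod.ext <;>
      simp only [Prod.smul_def, Prod.fst_add, Prod.snd_add, Prod.smul_fst, Prod.smul_snd,
        smul_eq_mul] <;>
    · rw [htdef, hsdef]
      simp only [crossProd] at hfd hga ⊢
      field_simp
      ring
  · exact ⟨1 - t, t, by linarith, ht0, by ring, rfl⟩

lemma segCross_swap_left {a b c d : Pt} (h : SegCross a b c d) : SegCross b a c d := by
  obtain ⟨x, hx1, hx2⟩ := h
  exact ⟨x, by rwa [openSegment_symm], hx2⟩

lemma segCross_swap_right {a b c d : Pt} (h : SegCross a b c d) : SegCross a b d c := by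
  obtain ⟨x, hx1, hx2⟩ := h
  exact ⟨x, hx1, by rwa [openSegment_symm]⟩

lemma chord_cross {C : Finset Pt} (hC : ConvexPos C) (hcard : 2 ≤ C.card)
    {x y z w : Pt} (hx : x ∈ C) (hy : y ∈ C) (hz : z ∈ C) (hw : w ∈ C)
    (hz1 : theta (ctr C) x < theta (ctr C) z) (hz2 : theta (ctr C) z < theta (ctr C) y)
    (hw_out : theta (ctr C) w < theta (ctr C) x ∨ theta (ctr C) y < theta (ctr C) w) :
    crossProd x y z * crossProd x y w < 0 ∧ crossProd z w x * crossProd z w y < 0 := by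
  have hxyz : crossProd x y z < 0 := by
    have := star_lemma hC hcard hx hz hy hz1 hz2
    rw [show crossProd x y z = -crossProd x z y from by rw [crossProd_swap23]]
    linarith
  rcases hw_out with hw1 | hw1
  · have hwxy : 0 < crossProd w x y := star_lemma hC hcard hw hx hy hw1 (hz1.trans hz2)
    have hwxz : 0 < crossProd w x z := star_lemma hC hcard hw hx hz hw1 hz1
    have hwzy : 0 < crossProd w z y := star_lemma hC hcard hw hz hy (hw1.trans hz1) hz2
    refine ⟨mul_neg_of_neg_of_pos hxyz (by rwa [← crossProd_cyc w x y] at hwxy), ?_⟩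
    have e1 : crossProd z w x = crossProd w x z := (crossProd_cyc z w x).symm
    have e2 : crossProd z w y = -crossProd w z y := by
      rw [crossProd_swap12 w z y]
    rw [e1, e2]
    exact mul_neg_of_pos_of_neg hwxz (by linarith)
  · have hxyw : 0 < crossProd x y w := star_lemma hC hcard hx hy hw (hz1.trans hz2) hw1
    have hxzw : 0 < crossProd x z w := star_lemma hC hcard hx hz hw hz1 (hz2.trans hw1)
    have hzyw : 0 < crossProd z y w := star_lemma hC hcard hz hy hw hz2 hw1
    refine ⟨mul_neg_of_neg_of_pos hxyz hxyw, ?_⟩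
    have e1 : crossProd z w x = crossProd x z w := crossProd_cyc x z w
    have e2 : crossProd z w y = -crossProd z y w := by
      rw [crossProd_swap23 z y w]
    rw [e1, e2]
    exact mul_neg_of_pos_of_neg hxzw (by linarith)

lemma nat_ivt {P : ℕ → Prop} {a b : ℕ} (hab : a ≤ b) (ha : P a) (hb : ¬ P b) :
    ∃ j, a ≤ j ∧ j < b ∧ P j ∧ ¬ P (j + 1) := by
  by_contra h
  push_neg at h
  have key : ∀ k, a + k ≤ b → P (a + k) := by
    intro k
    induction k with
    | zero => intro _; simpa using ha
    | succ m ih =>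
      intro hm
      have h1 : P (a + m) := ih (by omega)
      have h2 := h (a + m) (by omega) (by omega) h1
      rwa [show a + (m + 1) = a + m + 1 by omega]
  have := key (b - a) (by omega)
  rw [show a + (b - a) = b by omega] at this
  exact hb this

lemma zmod_cut {n : ℕ} [NeZero n] (P : ZMod n → Prop) {a b : ZMod n}
    (ha : P a) (hb : ¬ P b) :
    (∃ i, P i ∧ ¬ P (i + 1)) ∧ (∃ i, ¬ P i ∧ P (i + 1)) := by
  constructor
  · by_contra h
    push_neg at h
    have key : ∀ k : ℕ, P (a + (k : ZMod n)) := by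
      intro k
      induction k with
      | zero => simpa using ha
      | succ m ih =>
        have := h _ ih
        rwa [show a + ((m : ZMod n)) + 1 = a + ((m + 1 : ℕ) : ZMod n) by push_cast; ring]
          at this
    have := key ((b - a).val)
    rw [ZMod.natCast_zmod_val, add_sub_cancel] at this
    exact hb this
  · by_contra h
    push_neg at h
    have key : ∀ k : ℕ, ¬ P (b + (k : ZMod n)) := by
      intro k
      induction k with
      | zero => simpa using hb
      | succ m ih =>
        intro hcon
        rw [show b + ((m + 1 : ℕ) : ZMod n) = b + (m : ZMod n) + 1 by push_cast; ring] at hcon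
        exact h _ ih hcon
    have := key ((a - b).val)
    rw [ZMod.natCast_zmod_val, add_sub_cancel] at this
    exact this ha

lemma cast_ne_zero_zmod {n j : ℕ} (h1 : 1 ≤ j) (h2 : j < n) : ((j : ℕ) : ZMod n) ≠ 0 := by
  rw [Ne, ZMod.natCast_eq_zero_iff]
  intro hdvd
  have := Nat.le_of_dvd (by omega) hdvd
  omega

lemma no_inside_outside {C : Finset Pt} (hC : ConvexPos C) (hcard : 2 ≤ C.card)
    {n : ℕ} (hn : 3 ≤ n) {f : ZMod n → Pt} (hfC : ∀ i, f i ∈ C)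
    (hfinj : Function.Injective f)
    (hncr : NoncrossingEdges (cycleEdges n f))
    {x y : Pt} (hedge : ∃ i : ZMod n, (f i = x ∧ f (i + 1) = y) ∨ (f i = y ∧ f (i + 1) = x))
    {a : ZMod n} (hza : f a ≠ x ∧ f a ≠ y)
    (hina : theta (ctr C) x < theta (ctr C) (f a) ∧ theta (ctr C) (f a) < theta (ctr C) y)
    {b : ZMod n} (hzb : f b ≠ x ∧ f b ≠ y)
    (houtb : theta (ctr C) (f b) < theta (ctr C) x ∨ theta (ctr C) y < theta (ctr C) (f b)) :
    False := by
  haveI : NeZero n := ⟨by omega⟩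
  obtain ⟨i, hi⟩ := hedge
  set o := ctr C with hodef
  have hxC : x ∈ C := by rcases hi with ⟨h1, h2⟩ | ⟨h1, h2⟩
                         · exact h1 ▸ hfC i
                         · exact h2 ▸ hfC (i + 1)
  have hyC : y ∈ C := by rcases hi with ⟨h1, h2⟩ | ⟨h1, h2⟩
                         · exact h2 ▸ hfC (i + 1)
                         · exact h1 ▸ hfC i
  -- membership exclusions for indices
  have hidx : ∀ k : ZMod n, f k ≠ x → f k ≠ y → k ≠ i ∧ k ≠ i + 1 := by
    intro k hk1 hk2
    rcases hi with ⟨h1, h2⟩ | ⟨h1, h2⟩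
    · exact ⟨fun h => hk1 (h ▸ h1 ▸ rfl), fun h => hk2 (h ▸ h2 ▸ rfl)⟩
    · exact ⟨fun h => hk2 (h ▸ h1 ▸ rfl), fun h => hk1 (h ▸ h2 ▸ rfl)⟩
  have hcastm1 : ((n - 1 : ℕ) : ZMod n) = -1 := by
    rw [Nat.cast_sub (by omega : 1 ≤ n), ZMod.natCast_self]
    push_cast
    ring
  have hval : ∀ k : ZMod n, k ≠ i → k ≠ i + 1 →
      1 ≤ (k - i - 1).val ∧ (k - i - 1).val ≤ n - 2 ∧
        f (i + 1 + (((k - i - 1).val : ℕ) : ZMod n)) = f k := by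
    intro k hk1 hk2
    have hv := ZMod.val_lt (k - i - 1)
    have hcast : (((k - i - 1).val : ℕ) : ZMod n) = k - i - 1 := ZMod.natCast_zmod_val _
    refine ⟨?_, ?_, by rw [hcast]; congr 1; ring⟩
    · by_contra h
      push_neg at h
      have h0 : (k - i - 1).val = 0 := by omega
      have := (ZMod.val_eq_zero _).mp h0
      apply hk2
      linear_combination this
    · by_contra h
      push_neg at h
      have h0 : (k - i - 1).val = n - 1 := by omega
      have : k - i - 1 = ((n - 1 : ℕ) : ZMod n) := by rw [← h0, hcast]
      rw [hcastm1] at this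
      apply hk1
      linear_combination this
  obtain ⟨hai, hai1⟩ := hidx a hza.1 hza.2
  obtain ⟨hbi, hbi1⟩ := hidx b hzb.1 hzb.2
  obtain ⟨ha1, ha2, ha3⟩ := hval a hai hai1
  obtain ⟨hb1, hb2, hb3⟩ := hval b hbi hbi1
  set ja := (a - i - 1).val with hjadef
  set jb := (b - i - 1).val with hjbdef
  set Q : ℕ → Prop := fun j =>
    theta o x < theta o (f (i + 1 + ((j : ℕ) : ZMod n))) ∧
      theta o (f (i + 1 + ((j : ℕ) : ZMod n))) < theta o y with hQdef
  have hQa : Q ja := by rw [hQdef]; dsimp only; rw [ha3]; exact hina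
  have hQb : ¬ Q jb := by
    rw [hQdef]; dsimp only; rw [hb3]
    rcases houtb with h | h
    · intro hcon; linarith [hcon.1]
    · intro hcon; linarith [hcon.2]
  -- find a path edge with one endpoint inside and the other not inside
  have main : ∃ j : ℕ, 1 ≤ j ∧ j + 1 ≤ n - 2 ∧
      ((Q j ∧ ¬ Q (j + 1)) ∨ (¬ Q j ∧ Q (j + 1))) := by
    rcases lt_trichotomy ja jb with hlt | heq | hgt
    · obtain ⟨j, hj1, hj2, hj3, hj4⟩ := nat_ivt hlt.le hQa hQb
      exact ⟨j, by omega, by omega, Or.inl ⟨hj3, hj4⟩⟩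
    · exact absurd (heq ▸ hQa) hQb
    · obtain ⟨j, hj1, hj2, hj3, hj4⟩ := nat_ivt (P := fun j => ¬ Q j) hgt.le hQb
        (not_not_intro hQa)
      exact ⟨j, by omega, by omega, Or.inr ⟨hj3, not_not.mp hj4⟩⟩
  obtain ⟨j, hj1, hj2, hj3⟩ := main
  set k : ZMod n := i + 1 + ((j : ℕ) : ZMod n) with hkdef
  have hk1 : f (k + 1) = f (i + 1 + (((j + 1 : ℕ)) : ZMod n)) := by
    congr 1
    push_cast
    ring
  -- k and k+1 avoid i and i+1
  have hkne : k ≠ i ∧ k ≠ i + 1 ∧ k + 1 ≠ i ∧ k + 1 ≠ i + 1 := by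
    refine ⟨?_, ?_, ?_, ?_⟩
    · intro h
      have : ((j + 1 : ℕ) : ZMod n) = 0 := by
        push_cast
        linear_combination h
      exact cast_ne_zero_zmod (by omega) (by omega) this
    · intro h
      have : ((j : ℕ) : ZMod n) = 0 := by linear_combination h
      exact cast_ne_zero_zmod (by omega) (by omega) this
    · intro h
      have : ((j + 2 : ℕ) : ZMod n) = 0 := by
        push_cast
        linear_combination h
      exact cast_ne_zero_zmod (by omega) (by omega) this
    · intro h
      have : ((j + 1 : ℕ) : ZMod n) = 0 := by
        push_cast
        linear_combination h
      exact cast_ne_zero_zmod (by omega) (by omega) this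
  have hkx : f k ≠ x ∧ f k ≠ y ∧ f (k + 1) ≠ x ∧ f (k + 1) ≠ y := by
    have e1 : f k ≠ f i := fun h => hkne.1 (hfinj h)
    have e2 : f k ≠ f (i + 1) := fun h => hkne.2.1 (hfinj h)
    have e3 : f (k + 1) ≠ f i := fun h => hkne.2.2.1 (hfinj h)
    have e4 : f (k + 1) ≠ f (i + 1) := fun h => hkne.2.2.2 (hfinj h)
    rcases hi with ⟨h1, h2⟩ | ⟨h1, h2⟩
    · exact ⟨h1 ▸ e1, h2 ▸ e2, h1 ▸ e3, h2 ▸ e4⟩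
    · exact ⟨h2 ▸ e2, h1 ▸ e1, h2 ▸ e4, h1 ▸ e3⟩
  have hθne : ∀ {p q : Pt}, p ∈ C → q ∈ C → p ≠ q → theta o p ≠ theta o q :=
    fun hp hq hne h => hne (theta_inj hC hcard hp hq h)
  have hxylt : theta o x < theta o y := lt_trans hina.1 hina.2
  have hQk : ∀ j' : ℕ, Q j' ↔ (theta o x < theta o (f (i + 1 + ((j' : ℕ) : ZMod n))) ∧
      theta o (f (i + 1 + ((j' : ℕ) : ZMod n))) < theta o y) := fun _ => Iff.rfl
  have houtside : ∀ {p : Pt}, p ∈ C → p ≠ x → p ≠ y →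
      ¬ (theta o x < theta o p ∧ theta o p < theta o y) →
      (theta o p < theta o x ∨ theta o y < theta o p) := by
    intro p hpC hpx hpy hnot
    rcases lt_or_ge (theta o p) (theta o x) with h | h
    · exact Or.inl h
    · have h1 : theta o x < theta o p := lt_of_le_of_ne h (hθne hxC hpC (Ne.symm hpx))
      rcases lt_or_ge (theta o p) (theta o y) with h2 | h2
      · exact absurd ⟨h1, h2⟩ hnot
      · exact Or.inr (lt_of_le_of_ne h2 (hθne hyC hpC (Ne.symm hpy)))
  have hQj : Q j ↔ (theta o x < theta o (f k) ∧ theta o (f k) < theta o y) := by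
    rw [hQk j, hkdef]
  have hQj1 : Q (j + 1) ↔ (theta o x < theta o (f (k + 1)) ∧
      theta o (f (k + 1)) < theta o y) := by
    rw [hQk (j + 1), hk1]
  have scross : SegCross x y (f k) (f (k + 1)) := by
    rcases hj3 with ⟨hin, hout⟩ | ⟨hout, hin⟩
    · rw [hQj] at hin
      rw [hQj1] at hout
      have houtw := houtside (hfC (k + 1)) hkx.2.2.1 hkx.2.2.2 hout
      have hcross := chord_cross hC hcard hxC hyC (hfC k) (hfC (k + 1))
        hin.1 hin.2 houtw
      exact segCross_of_straddle hcross.1 hcross.2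
    · rw [hQj1] at hin
      rw [hQj] at hout
      have houtw := houtside (hfC k) hkx.1 hkx.2.1 hout
      have hcross := chord_cross hC hcard hxC hyC (hfC (k + 1)) (hfC k)
        hin.1 hin.2 houtw
      exact segCross_swap_right (segCross_of_straddle hcross.1 hcross.2)
  have scross2 : SegCross (f i) (f (i + 1)) (f k) (f (k + 1)) := by
    rcases hi with ⟨h1, h2⟩ | ⟨h1, h2⟩
    · rw [h1, h2]; exact scross
    · rw [h1, h2]; exact segCross_swap_left scross
  exact hncr (f i, f (i + 1)) ⟨i, rfl⟩ (f k, f (k + 1)) ⟨k, rfl⟩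
    (by intro h
        exact hkne.1 (hfinj (congrArg Prod.fst h)).symm) scross2

end AuxGeom

/-- `R_c(C_n) ≥ (n-1)² + 1` for `n ≥ 3`: on any set of `(n-1)²` points
in convex position there is a symmetric 2-colouring of the complete geometric graph
with no monochromatic non-crossing copy of the cycle `C_n`. -/
theorem stmt_10 (n : ℕ) (hn : 3 ≤ n) (C : Finset Pt)
    (hcard : C.card = (n - 1) ^ 2) (hC : ConvexPos C) :
    ∃ χ : Pt → Pt → Bool, (∀ p q, χ p q = χ q p) ∧
      ¬ ∃ (c : Bool) (f : ZMod n → Pt),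
          (∀ i, f i ∈ C) ∧ Function.Injective f ∧
          (∀ e ∈ cycleEdges n f, χ e.1 e.2 = c) ∧
          NoncrossingEdges (cycleEdges n f) := by
  haveI : NeZero n := ⟨by omega⟩
  have hcard2 : 2 ≤ C.card := by
    rw [hcard, pow_two]
    have h2 : 2 ≤ n - 1 := by omega
    nlinarith
  set o := ctr C with hodef
  set rk : Pt → ℕ := fun p => (C.filter (fun q => theta o q < theta o p)).card with hrkdef
  set blk : Pt → ℕ := fun p => rk p / (n - 1) with hblkdef
  refine ⟨fun p q => decide (blk p = blk q), fun p q => ?_, ?_⟩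
  · simp only [decide_eq_decide]; exact eq_comm
  rintro ⟨c, f, hfC, hfinj, hmono, hncr⟩
  have hrk_lt : ∀ p ∈ C, rk p < C.card := by
    intro p hp
    apply Finset.card_lt_card
    rw [Finset.ssubset_iff_of_subset (Finset.filter_subset _ _)]
    exact ⟨p, hp, by simp⟩
  have hrk_mono : ∀ p ∈ C, ∀ q ∈ C, theta o p < theta o q → rk p < rk q := by
    intro p hp q hq h
    apply Finset.card_lt_card
    rw [Finset.ssubset_iff_of_subset]
    · exact ⟨p, Finset.mem_filter.mpr ⟨hp, h⟩, by simp⟩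
    · intro r hr
      rw [Finset.mem_filter] at hr ⊢
      exact ⟨hr.1, hr.2.trans h⟩
  have hrk_inj : ∀ p ∈ C, ∀ q ∈ C, rk p = rk q → p = q := by
    intro p hp q hq h
    rcases lt_trichotomy (theta o p) (theta o q) with hl | he | hl
    · exact absurd h (Nat.ne_of_lt (hrk_mono p hp q hq hl))
    · exact theta_inj hC hcard2 hp hq he
    · exact absurd h.symm (Nat.ne_of_lt (hrk_mono q hq p hp hl))
  have hblk_lt : ∀ p ∈ C, blk p < n - 1 := by
    intro p hp
    have hb : blk p = rk p / (n - 1) := rfl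
    rw [hb, Nat.div_lt_iff_lt_mul (by omega : 0 < n - 1)]
    have := hrk_lt p hp
    rw [hcard, pow_two] at this
    omega
  have hmono' : ∀ i : ZMod n, (decide (blk (f i) = blk (f (i + 1))) = c) :=
    fun i => hmono (f i, f (i + 1)) ⟨i, rfl⟩
  cases c with
  | true =>
    have hsame : ∀ i : ZMod n, blk (f i) = blk (f (i + 1)) :=
      fun i => of_decide_eq_true (hmono' i)
    have hall : ∀ k : ℕ, blk (f ((k : ℕ) : ZMod n)) = blk (f 0) := by
      intro k
      induction k with
      | zero => norm_num
      | succ m ih =>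
        rw [show (((m + 1 : ℕ)) : ZMod n) = ((m : ℕ) : ZMod n) + 1 by push_cast; ring,
          ← hsame]
        exact ih
    have hallz : ∀ i : ZMod n, blk (f i) = blk (f 0) := by
      intro i
      have := hall i.val
      rwa [ZMod.natCast_zmod_val] at this
    have hinj2 : Function.Injective (fun i : ZMod n => rk (f i)) := by
      intro i j h
      exact hfinj (hrk_inj _ (hfC i) _ (hfC j) h)
    have hcardS : (Finset.image (fun i : ZMod n => rk (f i)) Finset.univ).card = n := by
      rw [Finset.card_image_of_injective _ hinj2, Finset.card_univ, ZMod.card]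
    have hsub : (Finset.image (fun i : ZMod n => rk (f i)) Finset.univ) ⊆
        Finset.Ico ((n - 1) * blk (f 0)) ((n - 1) * blk (f 0) + (n - 1)) := by
      intro m hm
      rw [Finset.mem_image] at hm
      obtain ⟨i, _, hi⟩ := hm
      have hbi : rk (f i) / (n - 1) = blk (f 0) := hallz i
      have hd := Nat.div_add_mod (rk (f i)) (n - 1)
      have hmlt := Nat.mod_lt (rk (f i)) (show 0 < n - 1 by omega)
      rw [hbi] at hd
      rw [Finset.mem_Ico, ← hi]
      constructor
      · exact Nat.le.intro hd
      · calc rk (f i) = (n - 1) * blk (f 0) + rk (f i) % (n - 1) := hd.symm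
          _ < (n - 1) * blk (f 0) + (n - 1) := Nat.add_lt_add_left hmlt _
    have hle := Finset.card_le_card hsub
    rw [hcardS, Nat.card_Ico] at hle
    omega
  | false =>
    have hdiff : ∀ i : ZMod n, blk (f i) ≠ blk (f (i + 1)) :=
      fun i => of_decide_eq_false (hmono' i)
    obtain ⟨i0, -, j0, -, hne0, heq0⟩ := Finset.exists_ne_map_eq_of_card_lt_of_maps_to
      (s := (Finset.univ : Finset (ZMod n))) (t := Finset.range (n - 1))
      (f := fun i => blk (f i))
      (by rw [Finset.card_univ, ZMod.card, Finset.card_range]; omega)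
      (fun i _ => Finset.mem_range.mpr (hblk_lt (f i) (hfC i)))
    set P := Finset.filter (fun ij : ZMod n × ZMod n =>
      blk (f ij.1) = blk (f ij.2) ∧ rk (f ij.1) < rk (f ij.2))
      (Finset.univ ×ˢ Finset.univ) with hP
    have hPne : P.Nonempty := by
      have hfne : f i0 ≠ f j0 := fun h => hne0 (hfinj h)
      have hrkne : rk (f i0) ≠ rk (f j0) :=
        fun h => hfne (hrk_inj _ (hfC i0) _ (hfC j0) h)
      rcases lt_or_gt_of_ne hrkne with hl | hl
      · exact ⟨(i0, j0), Finset.mem_filter.mpr ⟨by simp, heq0, hl⟩⟩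
      · exact ⟨(j0, i0), Finset.mem_filter.mpr ⟨by simp, heq0.symm, hl⟩⟩
    obtain ⟨ij, hijP, hmin⟩ := Finset.exists_min_image P
      (fun ij => rk (f ij.2) - rk (f ij.1)) hPne
    rw [hP, Finset.mem_filter] at hijP
    obtain ⟨-, hblkuv, hruv⟩ := hijP
    have hθuv : theta o (f ij.1) < theta o (f ij.2) := by
      rcases lt_trichotomy (theta o (f ij.1)) (theta o (f ij.2)) with h | h | h
      · exact h
      · exact absurd (congrArg rk (theta_inj hC hcard2 (hfC _) (hfC _) h)) (by omega)
      · exact absurd (hrk_mono _ (hfC _) _ (hfC _) h) (by omega)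
    have hgap : ∀ k : ZMod n, ¬ (rk (f ij.1) < rk (f k) ∧ rk (f k) < rk (f ij.2)) := by
      rintro k ⟨hk1, hk2⟩
      have hdu := Nat.div_add_mod (rk (f ij.1)) (n - 1)
      have hdv := Nat.div_add_mod (rk (f ij.2)) (n - 1)
      have hmv := Nat.mod_lt (rk (f ij.2)) (show 0 < n - 1 by omega)
      have hb1 : rk (f ij.1) / (n - 1) = blk (f ij.1) := rfl
      have hb2 : rk (f ij.2) / (n - 1) = blk (f ij.2) := rfl
      rw [hb1] at hdu
      rw [hb2, hblkuv.symm] at hdv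
      have e1 : blk (f ij.1) * (n - 1) ≤ rk (f k) := by
        calc blk (f ij.1) * (n - 1) = (n - 1) * blk (f ij.1) := Nat.mul_comm _ _
          _ ≤ rk (f ij.1) := Nat.le.intro hdu
          _ ≤ rk (f k) := hk1.le
      have e2 : rk (f k) < (blk (f ij.1) + 1) * (n - 1) := by
        calc rk (f k) < rk (f ij.2) := hk2
          _ = (n - 1) * blk (f ij.1) + rk (f ij.2) % (n - 1) := hdv.symm
          _ < (n - 1) * blk (f ij.1) + (n - 1) := Nat.add_lt_add_left hmv _
          _ = (blk (f ij.1) + 1) * (n - 1) := by ring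
      have hblkk : blk (f k) = blk (f ij.1) := Nat.div_eq_of_lt_le e1 e2
      have hPk : (ij.1, k) ∈ P := Finset.mem_filter.mpr
        ⟨by simp, by rw [hblkk, hblkuv], hk1⟩
      have := hmin _ hPk
      simp only at this
      omega
    obtain ⟨⟨i1, hP1, hP2⟩, ⟨i2, hQ1, hQ2⟩⟩ :=
      zmod_cut (fun k => theta o (f k) ≤ theta o (f ij.1)) (a := ij.1) (b := ij.2)
        (le_refl _) (not_le.mpr hθuv)
    have key : ∀ x y : Pt,
        (∃ i : ZMod n, (f i = x ∧ f (i + 1) = y) ∨ (f i = y ∧ f (i + 1) = x)) →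
        theta o x ≤ theta o (f ij.1) → theta o (f ij.1) < theta o y →
        (x = f ij.1 ∧ y = f ij.2) ∨
          (∀ k : ZMod n, theta o x ≤ theta o (f k) ∧ theta o (f k) ≤ theta o y) := by
      intro x y hedge hxle hylt
      have hxC : x ∈ C := by
        obtain ⟨i', hi'⟩ := hedge
        rcases hi' with ⟨h1, -⟩ | ⟨-, h2⟩
        exacts [h1 ▸ hfC i', h2 ▸ hfC (i' + 1)]
      have hyC : y ∈ C := by
        obtain ⟨i', hi'⟩ := hedge
        rcases hi' with ⟨-, h2⟩ | ⟨h1, -⟩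
        exacts [h2 ▸ hfC (i' + 1), h1 ▸ hfC i']
      obtain ⟨ky, hky⟩ : ∃ k : ZMod n, f k = y := by
        obtain ⟨i', hi'⟩ := hedge
        rcases hi' with ⟨-, h2⟩ | ⟨h1, -⟩
        exacts [⟨i' + 1, h2⟩, ⟨i', h1⟩]
      have hxy : theta o x < theta o y := lt_of_le_of_lt hxle hylt
      -- an interior vertex (z) for the chord (x, y)
      have hzfind : ¬ (x = f ij.1 ∧ y = f ij.2) →
          ∃ a : ZMod n, (f a ≠ x ∧ f a ≠ y) ∧
            theta o x < theta o (f a) ∧ theta o (f a) < theta o y := by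
        intro hnot
        by_cases hxu : x = f ij.1
        · have hyv : y ≠ f ij.2 := fun h => hnot ⟨hxu, h⟩
          refine ⟨ij.2, ⟨?_, ?_⟩, ?_, ?_⟩
          · intro h
            rw [hxu] at h
            exact absurd (congrArg rk h) (by omega)
          · exact fun h => hyv h.symm
          · rw [hxu]; exact hθuv
          · -- theta o (f ij.2) < theta o y
            rcases lt_trichotomy (theta o (f ij.2)) (theta o y) with h | h | h
            · exact h
            · exact absurd (theta_inj hC hcard2 (hfC _) hyC h).symm hyv
            · exfalso
              apply hgap ky
              constructor
              · rw [hky]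
                exact hrk_mono _ (hfC _) _ hyC hylt
              · rw [hky]
                exact hrk_mono _ hyC _ (hfC _) h
        · refine ⟨ij.1, ⟨fun h => hxu h.symm, ?_⟩, ?_, hylt⟩
          · intro h
            rw [← h] at hylt
            exact lt_irrefl _ hylt
          · exact lt_of_le_of_ne hxle
              (fun h => hxu (theta_inj hC hcard2 hxC (hfC _) h))
      by_cases hcase : x = f ij.1 ∧ y = f ij.2
      · exact Or.inl hcase
      · right
        obtain ⟨a, hza, hina⟩ := hzfind hcase
        by_cases hout : ∃ k : ZMod n, (f k ≠ x ∧ f k ≠ y) ∧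
            (theta o (f k) < theta o x ∨ theta o y < theta o (f k))
        · obtain ⟨kb, hkb1, hkb2⟩ := hout
          exact absurd (no_inside_outside hC hcard2 hn hfC hfinj hncr hedge
            hza hina hkb1 hkb2) id
        · push_neg at hout
          intro k
          by_cases hkx : f k = x
          · rw [hkx]; exact ⟨le_refl _, hxy.le⟩
          by_cases hky' : f k = y
          · rw [hky']; exact ⟨hxy.le, le_refl _⟩
          · have h1 := hout k ⟨hkx, hky'⟩
            exact ⟨h1.1, h1.2⟩
    rcases key (f i1) (f (i1 + 1)) ⟨i1, Or.inl ⟨rfl, rfl⟩⟩ hP1 (not_le.mp hP2)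
      with hcase1 | hbound1
    · apply hdiff i1
      rw [hcase1.1, hcase1.2]
      exact hblkuv
    rcases key (f (i2 + 1)) (f i2) ⟨i2, Or.inr ⟨rfl, rfl⟩⟩ hQ2 (not_le.mp hQ1)
      with hcase2 | hbound2
    · apply hdiff i2
      rw [hcase2.1, hcase2.2]
      exact hblkuv.symm
    · have e1 := (hbound1 (i2 + 1)).1
      have e2 := (hbound2 i1).1
      have efi : f i1 = f (i2 + 1) :=
        theta_inj hC hcard2 (hfC _) (hfC _) (le_antisymm e1 e2)
      have e3 := (hbound1 i2).2
      have e4 := (hbound2 (i1 + 1)).2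
      have efi2 : f (i1 + 1) = f i2 :=
        theta_inj hC hcard2 (hfC _) (hfC _) (le_antisymm e4 e3)
      have hi12 : i1 = i2 + 1 := hfinj efi
      have hi21 : i1 + 1 = i2 := hfinj efi2
      have h2 : ((2 : ℕ) : ZMod n) = 0 := by
        push_cast
        linear_combination hi21 - hi12
      have hdvd := (ZMod.natCast_eq_zero_iff 2 n).mp h2
      have := Nat.le_of_dvd (by norm_num) hdvd
      omega

end
end

section
/- Let A and B be mutually avoiding finite planar point sets with canonical orders, let u, u' ∈ A with u ≺ u', let w ∈ A with w ⪯ u or u' ⪯ w or w ∈ {u, u'}, and let v ∈ B. Then the segments [u, u'] and [w, v] do not cross (they share no interior point of both segments, except possibly a common endpoint). -/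
noncomputable section

/-- Proposition `prop:muav`(3): for mutually avoiding sets `A`, `B`
with canonical orders, `u ≺ u'` in `A`, `w ∈ A` with `w ⪯ u` or `u' ⪯ w`, and
`v ∈ B`, the segments `[u, u']` and `[w, v]` do not cross. -/
theorem stmt_13 (A B : Finset Pt) (hAB : MutuallyAvoiding A B)
    (u u' w : Pt) (hu : u ∈ A) (hu' : u' ∈ A) (hw : w ∈ A)
    (v : Pt) (hv : v ∈ B)
    (huu' : precA B u u')
    (hwpos : precA B w u ∨ precA B u' w ∨ w = u ∨ w = u') :
    ¬ SegCross u u' w v := by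
  rintro ⟨p, hp1, hp2⟩
  obtain ⟨a, b, ha, hb, hab, habp⟩ := hp1
  obtain ⟨c, d, hc, hd, hcd, hcdp⟩ := hp2
  have c1 : crossProd v u u' < 0 := huu' v hv
  have hpe : a • u + b • u' = c • w + d • v := habp.trans hcdp.symm
  have ex : a * u.1 + b * u'.1 = c * w.1 + d * v.1 := by
    have := congrArg Prod.fst hpe
    simpa [Prod.smul_def] using this
  have ey : a * u.2 + b * u'.2 = c * w.2 + d * v.2 := by
    have := congrArg Prod.snd hpe
    simpa [Prod.smul_def] using this
  have ha' : a = 1 - b := by linarith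
  have hc' : c = 1 - d := by linarith
  subst ha' hc'
  have key1 : b * crossProd v u u' + (1 - d) * crossProd v w u = 0 := by
    simp only [crossProd]
    linear_combination (v.2 - u.2) * ex - (v.1 - u.1) * ey
  have key2 : (1 - b) * crossProd v u u' + (1 - d) * crossProd v u' w = 0 := by
    simp only [crossProd]
    linear_combination (v.1 - u'.1) * ey - (v.2 - u'.2) * ex
  rcases hwpos with h | h | rfl | rfl
  · have c2 : crossProd v w u < 0 := h v hv
    nlinarith [mul_pos hb (neg_pos.mpr c1), mul_pos hc (neg_pos.mpr c2)]
  · have c2 : crossProd v u' w < 0 := h v hv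
    nlinarith [mul_pos ha (neg_pos.mpr c1), mul_pos hc (neg_pos.mpr c2)]
  · have z : crossProd v w w = 0 := by simp [crossProd]; ring
    nlinarith [mul_pos hb (neg_pos.mpr c1)]
  · have z : crossProd v w w = 0 := by simp [crossProd]; ring
    nlinarith [mul_pos ha (neg_pos.mpr c1)]


end
end

section
/- Let n ≥ 1, let H be a set of at least 3nm vertices, and for each j ∈ [f] with f ≤ n let M_j be a vertex set of size at least 3mn², with all pairs between H and each M_j 2-coloured red/blue. Call a vertex h ∈ H good if for every j ∈ [f] it has at least 2m red neighbours in M_j. Then either at least 2nm vertices of H are good, or (for m ≥ n²) there exist an index j and sets W ⊆ H, C ⊆ M_j with |W| = |C| = n² such that all edges between W and C are blue. -/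
/-- Claim 4 of the paper: with `|H| ≥ 3nm`, sets `M j` (`j < f ≤ n`)
of size at least `3mn²`, edges symmetrically 2-coloured (red = `true`,
blue = `false`), and `m ≥ n²`, either at least `2nm` vertices of `H` are good
(having at least `2m` red neighbours in every `M j`), or there are an index `j < f`
and sets `W ⊆ H`, `C ⊆ M j` of size `n²` each with all edges between them blue. -/
theorem stmt_18 {α : Type*} [DecidableEq α] (n m f : ℕ)
    (hn : 1 ≤ n) (hf : f ≤ n) (hm : n ^ 2 ≤ m)
    (H : Finset α) (hH : 3 * n * m ≤ H.card)
    (M : ℕ → Finset α) (hM : ∀ j, j < f → 3 * m * n ^ 2 ≤ (M j).card)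
    (red : α → α → Bool) (hsym : ∀ a b, red a b = red b a) :
    (∃ Hg ⊆ H, 2 * n * m ≤ Hg.card ∧
      ∀ h ∈ Hg, ∀ j, j < f →
        2 * m ≤ ((M j).filter (fun z => red h z)).card) ∨
    (∃ j, j < f ∧ ∃ W C : Finset α, W ⊆ H ∧ C ⊆ M j ∧
      W.card = n ^ 2 ∧ C.card = n ^ 2 ∧
      ∀ w ∈ W, ∀ z ∈ C, red w z = false) := by
  classical
  set Hg : Finset α := H.filter (fun h => ∀ j, j < f →
      2 * m ≤ ((M j).filter (fun z => red h z)).card) with hHg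
  by_cases hgood : 2 * n * m ≤ Hg.card
  · left
    exact ⟨Hg, Finset.filter_subset _ _, hgood,
      fun h hh => (Finset.mem_filter.mp hh).2⟩
  · right
    push_neg at hgood
    set B : Finset α := H.filter (fun h => ¬ ∀ j, j < f →
        2 * m ≤ ((M j).filter (fun z => red h z)).card) with hB
    have hBcard : n * m ≤ B.card := by
      have key := Finset.card_filter_add_card_filter_not
        (s := H) (p := fun h => ∀ j, j < f →
          2 * m ≤ ((M j).filter (fun z => red h z)).card)
      rw [← hHg, ← hB] at key
      nlinarith
    -- choose a bad index for each bad vertex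
    have hchoice : ∀ b ∈ B, ∃ j, j < f ∧
        ((M j).filter (fun z => red b z)).card < 2 * m := by
      intro b hb
      have := (Finset.mem_filter.mp hb).2
      push_neg at this
      obtain ⟨j, hj, hlt⟩ := this
      exact ⟨j, hj, hlt⟩
    set g : α → ℕ := fun b =>
      if h : ∃ j, j < f ∧ ((M j).filter (fun z => red b z)).card < 2 * m
      then h.choose else 0 with hg
    have hgprop : ∀ b ∈ B, g b < f ∧
        ((M (g b)).filter (fun z => red b z)).card < 2 * m := by
      intro b hb
      obtain ⟨j, hj, hlt⟩ := hchoice b hb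
      have hex : ∃ j, j < f ∧ ((M j).filter (fun z => red b z)).card < 2 * m :=
        ⟨j, hj, hlt⟩
      simp only [hg, dif_pos hex]
      exact hex.choose_spec
    have hfpos : 0 < f := by
      rcases Nat.eq_zero_or_pos f with h0 | h0
      · exfalso
        have : B.Nonempty := Finset.card_pos.mp (by nlinarith)
        obtain ⟨b, hb⟩ := this
        obtain ⟨j, hj, _⟩ := hchoice b hb
        omega
      · exact h0
    -- pigeonhole
    have hmaps : ∀ b ∈ B, g b ∈ Finset.range f := fun b hb =>
      Finset.mem_range.mpr (hgprop b hb).1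
    have hcount : (Finset.range f).card * m ≤ B.card := by
      rw [Finset.card_range]
      calc f * m ≤ n * m := Nat.mul_le_mul_right _ hf
        _ ≤ B.card := hBcard
    obtain ⟨j, hjr, hjfib⟩ :=
      Finset.exists_le_card_fiber_of_mul_le_card_of_maps_to hmaps
        ⟨0, Finset.mem_range.mpr hfpos⟩ hcount
    have hjf : j < f := Finset.mem_range.mp hjr
    -- pick W of size n²
    obtain ⟨W, hWsub, hWcard⟩ :=
      Finset.exists_subset_card_eq (s := B.filter (fun b => g b = j)) (n := n ^ 2)
        (le_trans hm hjfib)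
    have hWB : ∀ w ∈ W, w ∈ B ∧ g w = j := by
      intro w hw
      exact Finset.mem_filter.mp (hWsub hw)
    -- blue set
    set Cfull : Finset α := (M j).filter (fun z => ∀ w ∈ W, red w z = false)
      with hCfull
    have hsplit := Finset.card_filter_add_card_filter_not
      (s := M j) (p := fun z => ∀ w ∈ W, red w z = false)
    have hsub : (M j).filter (fun z => ¬ ∀ w ∈ W, red w z = false) ⊆
        W.biUnion (fun w => (M j).filter (fun z => red w z)) := by
      intro z hz
      rw [Finset.mem_filter] at hz
      push_neg at hz
      obtain ⟨hzM, w, hw, hred⟩ := hz.imp id id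
      refine Finset.mem_biUnion.mpr ⟨w, hw, Finset.mem_filter.mpr ⟨hzM, ?_⟩⟩
      simpa using hred
    have hbu : (W.biUnion (fun w => (M j).filter (fun z => red w z))).card
        ≤ n ^ 2 * (2 * m) := by
      calc (W.biUnion (fun w => (M j).filter (fun z => red w z))).card
          ≤ ∑ w ∈ W, ((M j).filter (fun z => red w z)).card :=
            Finset.card_biUnion_le
        _ ≤ ∑ _w ∈ W, 2 * m := by
            refine Finset.sum_le_sum fun w hw => ?_
            have := (hgprop w (hWB w hw).1).2
            rw [(hWB w hw).2] at this
            omega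
        _ = n ^ 2 * (2 * m) := by rw [Finset.sum_const, smul_eq_mul, hWcard]
    have hMj := hM j hjf
    have hnsq : 1 ≤ n ^ 2 := Nat.one_le_pow _ _ hn
    have hCcard : n ^ 2 ≤ Cfull.card := by
      have h1 : ((M j).filter (fun z => ¬ ∀ w ∈ W, red w z = false)).card
          ≤ n ^ 2 * (2 * m) := le_trans (Finset.card_le_card hsub) hbu
      nlinarith [hsplit]
    obtain ⟨C, hCsub, hCcardeq⟩ := Finset.exists_subset_card_eq hCcard
    refine ⟨j, hjf, W, C, ?_, ?_, hWcard, hCcardeq, ?_⟩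
    · intro w hw
      exact Finset.mem_of_mem_filter w (hWB w hw).1
    · exact hCsub.trans (Finset.filter_subset _ _)
    · intro w hw z hz
      exact (Finset.mem_filter.mp (hCsub hz)).2 w hw
end
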